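/- If the least constructive fixed point μΓ of an epistemically guarded transition system Γ is decided, i.e., its lower and upper transition relations coincide, then Γ has a unique solution among epistemic transition structures over the same basis: there is exactly one M with ⟦Γ⟧M = M, namely M = (μΓ)_μ = (μΓ)_ν. -/
import Mathlib


namespace KBP

/-- `k`-step reachable states of a transition system with initial states `S0`. -/
def RSk {S : Type} (S0 : Set S) (T : Set (S × S)) : ℕ → Set S
  | 0 => S0
  | k + 1 => RSk S0 T k ∪ {s' | ∃ s ∈ RSk S0 T k, (s, s') ∈ T}

/-- All reachable states. -/
def Reach {S : Type} (S0 : Set S) (T : Set (S × S)) : Set S := ⋃ k, RSk S0 T k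

/-- Epistemic formulas (with the abbreviations `true`, `∨`, `M` as primitives). -/
inductive EFrm (P A : Type) : Type
  | prop : P → EFrm P A
  | nprop : P → EFrm P A
  | fls : EFrm P A
  | tru : EFrm P A
  | neg : EFrm P A → EFrm P A
  | and : EFrm P A → EFrm P A → EFrm P A
  | or : EFrm P A → EFrm P A → EFrm P A
  | K : A → EFrm P A → EFrm P A
  | M : A → EFrm P A → EFrm P A

/-- Positive and negative satisfaction over a must/can structure, as a pair. -/
def psns (E : A → Set (S × S)) (L : S → Set P) (S0 : Set S)
    (Tμ Tν : Set (S × S)) : EFrm P A → (S → Prop) × (S → Prop)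
  | .prop p => (fun s => p ∈ L s, fun s => p ∉ L s)
  | .nprop p => (fun s => p ∉ L s, fun s => p ∈ L s)
  | .fls => (fun _ => False, fun _ => True)
  | .tru => (fun _ => True, fun _ => False)
  | .neg φ => ((psns E L S0 Tμ Tν φ).2, (psns E L S0 Tμ Tν φ).1)
  | .and φ ψ =>
      (fun s => (psns E L S0 Tμ Tν φ).1 s ∧ (psns E L S0 Tμ Tν ψ).1 s,
       fun s => (psns E L S0 Tμ Tν φ).2 s ∨ (psns E L S0 Tμ Tν ψ).2 s)
  | .or φ ψ =>
      (fun s => (psns E L S0 Tμ Tν φ).1 s ∨ (psns E L S0 Tμ Tν ψ).1 s,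
       fun s => (psns E L S0 Tμ Tν φ).2 s ∧ (psns E L S0 Tμ Tν ψ).2 s)
  | .K a φ =>
      (fun s => ∀ s' ∈ Reach S0 Tν, (s, s') ∈ E a → (psns E L S0 Tμ Tν φ).1 s',
       fun s => ∃ s' ∈ Reach S0 Tμ, (s, s') ∈ E a ∧ (psns E L S0 Tμ Tν φ).2 s')
  | .M a φ =>
      (fun s => ∃ s' ∈ Reach S0 Tμ, (s, s') ∈ E a ∧ (psns E L S0 Tμ Tν φ).1 s',
       fun s => ∀ s' ∈ Reach S0 Tν, (s, s') ∈ E a → (psns E L S0 Tμ Tν φ).2 s')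

/-- Positive satisfaction `Y, s ⊨ₚ φ`. -/
def psat (E : A → Set (S × S)) (L : S → Set P) (S0 : Set S)
    (Tμ Tν : Set (S × S)) (s : S) (φ : EFrm P A) : Prop :=
  (psns E L S0 Tμ Tν φ).1 s

/-- Negative satisfaction `Y, s ⊨ₙ φ`. -/
def nsat (E : A → Set (S × S)) (L : S → Set P) (S0 : Set S)
    (Tμ Tν : Set (S × S)) (s : S) (φ : EFrm P A) : Prop :=
  (psns E L S0 Tμ Tν φ).2 s

/-- Lower part of the constructive interpretation. -/
def interpMu (E : A → Set (S × S)) (L : S → Set P) (S0 : Set S)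
    (Γ : Set (EFrm P A × Set (S × S))) (Tμ Tν : Set (S × S)) : Set (S × S) :=
  {p | ∃ g ∈ Γ, p ∈ g.2 ∧ p.1 ∈ Reach S0 Tμ ∧ psat E L S0 Tμ Tν p.1 g.1}

/-- Upper part of the constructive interpretation. -/
def interpNu (E : A → Set (S × S)) (L : S → Set P) (S0 : Set S)
    (Γ : Set (EFrm P A × Set (S × S))) (Tμ Tν : Set (S × S)) : Set (S × S) :=
  {p | ∃ g ∈ Γ, p ∈ g.2 ∧ p.1 ∈ Reach S0 Tν ∧ ¬ nsat E L S0 Tμ Tν p.1 g.1}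

/-- Ordinary (Kripke) satisfaction over the reachable part of an epistemic
transition structure with transition relation `T`. -/
def ksat (E : A → Set (S × S)) (L : S → Set P) (S0 : Set S)
    (T : Set (S × S)) : S → EFrm P A → Prop
  | s, .prop p => p ∈ L s
  | s, .nprop p => p ∉ L s
  | _, .fls => False
  | _, .tru => True
  | s, .neg φ => ¬ ksat E L S0 T s φ
  | s, .and φ ψ => ksat E L S0 T s φ ∧ ksat E L S0 T s ψ
  | s, .or φ ψ => ksat E L S0 T s φ ∨ ksat E L S0 T s ψ
  | s, .K a φ => ∀ s' ∈ Reach S0 T, (s, s') ∈ E a → ksat E L S0 T s' φ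
  | s, .M a φ => ∃ s' ∈ Reach S0 T, (s, s') ∈ E a ∧ ksat E L S0 T s' φ

/-- Ordinary interpretation of an epistemically guarded transition system. -/
def interpT (E : A → Set (S × S)) (L : S → Set P) (S0 : Set S)
    (Γ : Set (EFrm P A × Set (S × S))) (T : Set (S × S)) : Set (S × S) :=
  {p | ∃ g ∈ Γ, p ∈ g.2 ∧ p.1 ∈ Reach S0 T ∧ ksat E L S0 T p.1 g.1}

lemma decided_sat {S P A : Type} (E : A → Set (S × S)) (L : S → Set P)
    (S0 : Set S) (T : Set (S × S)) :
    ∀ φ : EFrm P A, ∀ s,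
      (psat E L S0 T T s φ ↔ ksat E L S0 T s φ) ∧
      (nsat E L S0 T T s φ ↔ ¬ ksat E L S0 T s φ) := by
  intro φ
  induction φ with
  | prop p => intro s; simp [psat, nsat, psns, ksat]
  | nprop p => intro s; simp [psat, nsat, psns, ksat]
  | fls => intro s; simp [psat, nsat, psns, ksat]
  | tru => intro s; simp [psat, nsat, psns, ksat]
  | neg φ ih => intro s
                simp only [psat, nsat, psns, ksat] at *
                constructor
                · rw [(ih s).2]
                · rw [(ih s).1]; tauto
  | and φ ψ ihφ ihψ =>
      intro s
      simp only [psat, nsat, psns, ksat] at *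
      constructor
      · rw [(ihφ s).1, (ihψ s).1]
      · rw [(ihφ s).2, (ihψ s).2]; tauto
  | or φ ψ ihφ ihψ =>
      intro s
      simp only [psat, nsat, psns, ksat] at *
      constructor
      · rw [(ihφ s).1, (ihψ s).1]
      · rw [(ihφ s).2, (ihψ s).2]; tauto
  | K a φ ih =>
      intro s
      simp only [psat, nsat, psns, ksat] at *
      constructor
      · constructor
        · intro h s' hs' hE; exact (ih s').1.mp (h s' hs' hE)
        · intro h s' hs' hE; exact (ih s').1.mpr (h s' hs' hE)
      · push_neg
        constructor
        · rintro ⟨s', hs', hE, hn⟩; exact ⟨s', hs', hE, ((ih s').2).mp hn⟩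
        · rintro ⟨s', hs', hE, hn⟩; exact ⟨s', hs', hE, ((ih s').2).mpr hn⟩
  | M a φ ih =>
      intro s
      simp only [psat, nsat, psns, ksat] at *
      constructor
      · constructor
        · rintro ⟨s', hs', hE, hn⟩; exact ⟨s', hs', hE, ((ih s').1).mp hn⟩
        · rintro ⟨s', hs', hE, hn⟩; exact ⟨s', hs', hE, ((ih s').1).mpr hn⟩
      · push_neg
        constructor
        · intro h s' hs' hE; exact (ih s').2.mp (h s' hs' hE)
        · intro h s' hs' hE; exact (ih s').2.mpr (h s' hs' hE)

lemma interpMu_decided {S P A : Type} (E : A → Set (S × S)) (L : S → Set P)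
    (S0 : Set S) (Γ : Set (EFrm P A × Set (S × S))) (T : Set (S × S)) :
    interpMu E L S0 Γ T T = interpT E L S0 Γ T := by
  ext p
  simp only [interpMu, interpT, Set.mem_setOf_eq]
  constructor
  · rintro ⟨g, hg, hp, hr, hs⟩; exact ⟨g, hg, hp, hr, (decided_sat E L S0 T g.1 p.1).1.mp hs⟩
  · rintro ⟨g, hg, hp, hr, hs⟩; exact ⟨g, hg, hp, hr, (decided_sat E L S0 T g.1 p.1).1.mpr hs⟩

lemma interpNu_decided {S P A : Type} (E : A → Set (S × S)) (L : S → Set P)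
    (S0 : Set S) (Γ : Set (EFrm P A × Set (S × S))) (T : Set (S × S)) :
    interpNu E L S0 Γ T T = interpT E L S0 Γ T := by
  ext p
  simp only [interpNu, interpT, Set.mem_setOf_eq]
  constructor
  · rintro ⟨g, hg, hp, hr, hs⟩
    refine ⟨g, hg, hp, hr, ?_⟩
    by_contra hk
    exact hs ((decided_sat E L S0 T g.1 p.1).2.mpr hk)
  · rintro ⟨g, hg, hp, hr, hs⟩
    exact ⟨g, hg, hp, hr, fun hn => ((decided_sat E L S0 T g.1 p.1).2.mp hn) hs⟩

/-- If the least constructive fixed point of `Γ` is decided (its lower and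
upper transition relations coincide), then `Γ` has a unique solution among
epistemic transition structures over the same basis, namely the common value
of the two bounds. -/
theorem decided_least_fixed_point_unique_solution {S P A : Type}
    (E : A → Set (S × S)) (L : S → Set P) (S0 : Set S)
    (Γ : Set (EFrm P A × Set (S × S))) (Tμ Tν : Set (S × S)) (hμν : Tμ ⊆ Tν)
    (hfixμ : interpMu E L S0 Γ Tμ Tν = Tμ)
    (hfixν : interpNu E L S0 Γ Tμ Tν = Tν)
    (hleast : ∀ Tμ' Tν' : Set (S × S), Tμ' ⊆ Tν' →
      interpMu E L S0 Γ Tμ' Tν' = Tμ' → interpNu E L S0 Γ Tμ' Tν' = Tν' →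
      Tμ ⊆ Tμ' ∧ Tν' ⊆ Tν)
    (hdec : Tμ = Tν) :
    interpT E L S0 Γ Tμ = Tμ ∧
    ∀ M : Set (S × S), interpT E L S0 Γ M = M → M = Tμ := by
  subst hdec
  constructor
  · rw [← interpMu_decided]; exact hfixμ
  · intro M hM
    have h1 : interpMu E L S0 Γ M M = M := by rw [interpMu_decided]; exact hM
    have h2 : interpNu E L S0 Γ M M = M := by rw [interpNu_decided]; exact hM
    have := hleast M M (subset_refl M) h1 h2
    exact le_antisymm this.2 this.1

end KBP
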